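/- arXiv:2408.04319 — 3 statements merged into one kernel-verified Lean document; each statement's English description precedes it below -/
import Mathlib

section
/- Suppose X : [s₀, ∞) → ℝ² solves the ODE X'(s) = X(s) + U(X(s), s), with |X(s₀)| ≥ 1, where U satisfies |U(y,s) − Ū(y)| ≤ (κ/10)⟨y⟩ for all y and s, Ū(y) = Ū₀(|y|) y/|y| is a radial vector field with 1 + Ū₀(ξ)/ξ ≥ κ for all ξ > 0, and κ ∈ (0,1]. Then |X(s)| ≥ e^{κ(s−s₀)/2} |X(s₀)| for all s ≥ s₀. -/
noncomputable section

abbrev E2 := EuclideanSpace ℝ (Fin 2)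

set_option maxHeartbeats 1000000 in
/-- a trajectory of `X' = X + U(X,s)` starting with `|X(s₀)| ≥ 1` escapes
exponentially, provided `U` is `(κ/10)⟨y⟩`-close to a radial field `Ū(y) = Ū₀(|y|) y/|y|`
with `1 + Ū₀(ξ)/ξ ≥ κ` for all `ξ > 0` and `κ ∈ (0,1]`. -/
theorem trajectory_escape (κ s₀ : ℝ) (hκ : 0 < κ) (hκ1 : κ ≤ 1)
    (U : E2 → ℝ → E2) (U₀ : ℝ → ℝ) (X : ℝ → E2)
    (hX : ∀ s, s₀ ≤ s → HasDerivAt X (X s + U (X s) s) s)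
    (hU : ∀ (y : E2) (s : ℝ),
      ‖U y s - (U₀ ‖y‖ / ‖y‖) • y‖ ≤ κ / 10 * Real.sqrt (1 + ‖y‖ ^ 2))
    (hrep : ∀ ξ : ℝ, 0 < ξ → κ ≤ 1 + U₀ ξ / ξ)
    (hX0 : 1 ≤ ‖X s₀‖) :
    ∀ s, s₀ ≤ s → Real.exp (κ * (s - s₀) / 2) * ‖X s₀‖ ≤ ‖X s‖ := by
  set φ : ℝ → ℝ := fun t => ‖X t‖ ^ 2 with hφdef
  -- derivative of φ
  have hφderiv : ∀ t, s₀ ≤ t →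
      HasDerivAt φ (2 * inner ℝ (X t) (X t + U (X t) t) : ℝ) t := by
    intro t ht
    have h1 := (hX t ht).inner (𝕜 := ℝ) (hX t ht)
    have h2 : (fun u => (inner ℝ (X u) (X u) : ℝ)) = φ := by
      funext u; exact real_inner_self_eq_norm_sq _
    rw [h2] at h1
    refine h1.congr_deriv ?_
    rw [real_inner_comm]; ring
  -- key pointwise inequality
  have hkey : ∀ t, (1/2 : ℝ) ≤ ‖X t‖ →
      κ * φ t ≤ 2 * inner ℝ (X t) (X t + U (X t) t) := by
    intro t hr
    set r := ‖X t‖ with hrdef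
    have hr0 : (0:ℝ) < r := lt_of_lt_of_le one_half_pos hr
    have hrep' := hrep r hr0
    have hsq : Real.sqrt (1 + r^2) ≤ 3 * r := by
      rw [show (3*r : ℝ) = Real.sqrt ((3*r)^2) from (Real.sqrt_sq (by positivity)).symm]
      exact Real.sqrt_le_sqrt (by nlinarith)
    have hdiff := hU (X t) t
    have habs : |(inner ℝ (X t) (U (X t) t - (U₀ r / r) • X t) : ℝ)| ≤
        r * ‖U (X t) t - (U₀ r / r) • X t‖ := abs_real_inner_le_norm _ _
    have hinner : -(r * (κ/10 * (3*r))) ≤ (inner ℝ (X t) (U (X t) t - (U₀ r / r) • X t) : ℝ) := by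
      have h1 : r * ‖U (X t) t - (U₀ r / r) • X t‖ ≤ r * (κ/10 * (3*r)) := by
        apply mul_le_mul_of_nonneg_left _ hr0.le
        exact hdiff.trans (by nlinarith)
      have := neg_abs_le (inner ℝ (X t) (U (X t) t - (U₀ r / r) • X t) : ℝ)
      linarith
    have hsm : (inner ℝ (X t) ((U₀ r / r) • X t) : ℝ) = (U₀ r / r) * r^2 := by
      rw [real_inner_smul_right, real_inner_self_eq_norm_sq]
    have hexp : (inner ℝ (X t) (X t + U (X t) t) : ℝ)
        = r^2 + (U₀ r / r) * r^2 + inner ℝ (X t) (U (X t) t - (U₀ r / r) • X t) := by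
      rw [inner_add_right, real_inner_self_eq_norm_sq, inner_sub_right, hsm]; ring
    have hφt : φ t = r^2 := rfl
    rw [hφt, hexp]
    nlinarith [sq_nonneg r, mul_le_mul_of_nonneg_right hrep' (sq_nonneg r)]
  -- the rescaled quantity
  set G : ℝ → ℝ := fun t => Real.exp (-κ * (t - s₀)) * φ t with hGdef
  have hGderiv : ∀ t, s₀ ≤ t → HasDerivAt G
      (Real.exp (-κ*(t-s₀)) * (2 * inner ℝ (X t) (X t + U (X t) t) - κ * φ t)) t := by
    intro t ht
    have he : HasDerivAt (fun u => Real.exp (-κ*(u-s₀))) (-κ * Real.exp (-κ*(t-s₀))) t := by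
      have h0 : HasDerivAt (fun u : ℝ => -κ*(u-s₀)) (-κ) t := by
        simpa using ((hasDerivAt_id t).sub_const s₀).const_mul (-κ)
      simpa [mul_comm] using h0.exp
    have := he.mul (hφderiv t ht)
    refine this.congr_deriv ?_
    ring
  have hφs₀ : 1 ≤ φ s₀ := by simp only [hφdef]; nlinarith
  have hφnonneg : ∀ t, 0 ≤ φ t := fun t => by positivity
  -- main claim
  have main : ∀ b, s₀ ≤ b → φ s₀ ≤ G b := by
    intro b hb
    by_contra hcon
    push_neg at hcon
    set A : Set ℝ := Set.Icc s₀ b ∩ G ⁻¹' Set.Ici (φ s₀) with hAdef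
    have hGcont : ContinuousOn G (Set.Icc s₀ b) := by
      apply ContinuousOn.mul
      · exact (Real.continuous_exp.comp (by continuity)).continuousOn
      · intro t ht
        exact ((hφderiv t ht.1).continuousAt).continuousWithinAt
    have hAclosed : IsClosed A :=
      hGcont.preimage_isClosed_of_isClosed isClosed_Icc isClosed_Ici
    have hGs₀ : G s₀ = φ s₀ := by simp [hGdef]
    have hs₀A : s₀ ∈ A := ⟨⟨le_refl _, hb⟩, by simp [hGs₀]⟩
    have hAbdd : BddAbove A := BddAbove.mono (Set.inter_subset_left) (bddAbove_Icc)
    set c := sSup A with hcdef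
    have hcA : c ∈ A := hAclosed.csSup_mem ⟨s₀, hs₀A⟩ hAbdd
    obtain ⟨⟨hcs₀, hcb⟩, hGc⟩ := hcA
    have hGc' : φ s₀ ≤ G c := hGc
    have hcb' : c < b := by
      rcases lt_or_eq_of_le hcb with h | h
      · exact h
      · exfalso; rw [h] at hGc'; linarith
    have hφc : 1 ≤ φ c := by
      have h1 : Real.exp (-κ * (c - s₀)) ≤ 1 := by
        rw [Real.exp_le_one_iff]; nlinarith
      have h2 : G c ≤ φ c := by
        calc G c ≤ 1 * φ c := by
              exact mul_le_mul_of_nonneg_right h1 (hφnonneg c)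
          _ = φ c := one_mul _
      linarith
    have hφcont : ContinuousAt φ c := (hφderiv c hcs₀).continuousAt
    have hev : ∀ᶠ t in nhds c, (1/4 : ℝ) < φ t :=
      hφcont (Ioi_mem_nhds (by linarith : (1/4:ℝ) < φ c))
    obtain ⟨ε, hε, hball⟩ := Metric.eventually_nhds_iff.mp hev
    set δ := min (ε/2) (b - c) with hδdef
    have hδpos : 0 < δ := lt_min (by linarith) (by linarith)
    have hδε : δ < ε := lt_of_le_of_lt (min_le_left _ _) (by linarith)
    have hδb : c + δ ≤ b := by
      have := min_le_right (ε/2) (b - c); simp only [hδdef]; linarith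
    have hsub : Set.Icc c (c + δ) ⊆ Set.Icc s₀ b :=
      Set.Icc_subset_Icc hcs₀ hδb
    have hmono : MonotoneOn G (Set.Icc c (c + δ)) := by
      apply monotoneOn_of_deriv_nonneg (convex_Icc _ _) (hGcont.mono hsub)
      · intro t ht
        rw [interior_Icc] at ht
        exact ((hGderiv t (le_of_lt (lt_of_le_of_lt hcs₀ ht.1))).differentiableAt).differentiableWithinAt
      · intro t ht
        rw [interior_Icc] at ht
        have hts₀ : s₀ ≤ t := le_of_lt (lt_of_le_of_lt hcs₀ ht.1)
        rw [(hGderiv t hts₀).deriv]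
        have hφt : (1/4 : ℝ) < φ t := by
          apply hball
          rw [Real.dist_eq, abs_lt]
          constructor <;> [linarith [ht.1]; linarith [ht.2]]
        have hφt2 : (1/4 : ℝ) < ‖X t‖ ^ 2 := hφt
        have hrt : (1/2 : ℝ) ≤ ‖X t‖ := by
          nlinarith [norm_nonneg (X t)]
        have := hkey t hrt
        have hexppos : 0 < Real.exp (-κ*(t-s₀)) := Real.exp_pos _
        nlinarith
    have hGcδ : G c ≤ G (c + δ) := by
      apply hmono (Set.left_mem_Icc.mpr (by linarith)) _ (by linarith)
      exact Set.right_mem_Icc.mpr (by linarith)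
    have hcδA : c + δ ∈ A := ⟨⟨by linarith, hδb⟩, by
      simp only [Set.mem_preimage, Set.mem_Ici]; linarith⟩
    have : c + δ ≤ c := le_csSup hAbdd hcδA
    linarith
  -- conclude
  intro s hs
  have h1 := main s hs
  have h2 : Real.exp (κ * (s - s₀)) * φ s₀ ≤ φ s := by
    have he : (0:ℝ) < Real.exp (-κ * (s - s₀)) := Real.exp_pos _
    have hmul : Real.exp (κ * (s - s₀)) * Real.exp (-κ * (s - s₀)) = 1 := by
      rw [← Real.exp_add]; ring_nf; exact Real.exp_zero
    calc Real.exp (κ * (s - s₀)) * φ s₀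
        ≤ Real.exp (κ * (s - s₀)) * (Real.exp (-κ * (s - s₀)) * φ s) := by
          apply mul_le_mul_of_nonneg_left h1 (Real.exp_pos _).le
      _ = (Real.exp (κ * (s - s₀)) * Real.exp (-κ * (s - s₀))) * φ s := by ring
      _ = φ s := by rw [hmul, one_mul]
  have hE : Real.exp (κ * (s - s₀) / 2) ^ 2 = Real.exp (κ * (s - s₀)) := by
    rw [sq, ← Real.exp_add]; ring_nf
  have hEpos : 0 < Real.exp (κ * (s - s₀) / 2) := Real.exp_pos _
  have hφsdef : φ s = ‖X s‖ ^ 2 := rfl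
  have hφs₀def : φ s₀ = ‖X s₀‖ ^ 2 := rfl
  have h3 : (Real.exp (κ * (s - s₀) / 2) * ‖X s₀‖) ^ 2 ≤ ‖X s‖ ^ 2 := by
    rw [mul_pow, hE]
    rw [hφsdef, hφs₀def] at h2
    exact h2
  have h4 := Real.sqrt_le_sqrt h3
  rwa [Real.sqrt_sq (by positivity), Real.sqrt_sq (norm_nonneg _)] at h4
end
end

section
/- Let W₁(S) ≤ 0 < W_e < W₂(S) ≤ 1 < r ≤ W₃(S) be real numbers for each S > P (where W_e, r are constants, P ≥ 0), and let W : (P, ∞) → ℝ be C¹ with: (i) W(S) < W₂(S) for all S > P; (ii) W(S) → W_e⁺ with W(S) > W_e for all large S; (iii) whenever dW/dS(S) = 0 one has W(S) ∈ {W₁(S), W₂(S), W₃(S)}. Then W(S) > W₁(S) and in fact W(S) ≥ W_e for all S > P. -/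
/-!
If `W` dipped below `W_e`, let `t` be the last point where `W = W_e` (it exists since `W > W_e` on
a tail). On `[t, ∞)` we have `W_e ≤ W < W₂`, so `W` lies strictly between `W₁ ≤ 0` and
`W₂ ≤ W₃` and, by hypothesis, has no critical point there. By Darboux's
theorem `W'` has a constant sign on `[t, ∞)`, so `W` is strictly monotone there and cannot
take at `t` the value `W_e` of its limit at infinity.
-/

open Set Filter Topology

theorem StrictMonoOn.lt_of_tendsto_atTop {f : ℝ → ℝ} {t c : ℝ} (hf : StrictMonoOn f (Ici t))
    (hlim : Tendsto f atTop (𝓝 c)) : f t < c := by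
  have hle : f (t + 1) ≤ c := ge_of_tendsto hlim <| eventually_atTop.2
    ⟨t + 1, fun s hs => hf.monotoneOn (by simp) (by simp only [mem_Ici]; linarith) hs⟩
  exact (hf (by simp) (by simp) (by linarith)).trans_le hle

theorem StrictAntiOn.lt_of_tendsto_atTop {f : ℝ → ℝ} {t c : ℝ} (hf : StrictAntiOn f (Ici t))
    (hlim : Tendsto f atTop (𝓝 c)) : c < f t := by
  simpa using hf.neg.lt_of_tendsto_atTop hlim.neg

theorem ne_of_tendsto_atTop_of_hasDerivAt_ne_zero {f f' : ℝ → ℝ} {t c : ℝ}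
    (hf : ∀ x ∈ Ici t, HasDerivAt f (f' x) x) (hf' : ∀ x ∈ Ici t, f' x ≠ 0)
    (hlim : Tendsto f atTop (𝓝 c)) : f t ≠ c := by
  have hcont : ContinuousOn f (Ici t) := fun x hx => (hf x hx).continuousAt.continuousWithinAt
  have hderiv : ∀ x ∈ interior (Ici t), HasDerivWithinAt f (f' x) (interior (Ici t)) x :=
    fun x hx => (hf x (interior_subset hx)).hasDerivWithinAt
  rcases hasDerivWithinAt_forall_lt_or_forall_gt_of_forall_ne (convex_Ici t)
    (fun x hx => (hf x hx).hasDerivWithinAt) hf' with hneg | hpos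
  · have hanti := strictAntiOn_of_hasDerivWithinAt_neg (convex_Ici t) hcont hderiv
      fun x hx => hneg x (interior_subset hx)
    exact (hanti.lt_of_tendsto_atTop hlim).ne'
  · have hmono := strictMonoOn_of_hasDerivWithinAt_pos (convex_Ici t) hcont hderiv
      fun x hx => hpos x (interior_subset hx)
    exact (hmono.lt_of_tendsto_atTop hlim).ne

theorem ContinuousOn.exists_last_crossing_Icc {f : ℝ → ℝ} {a b c : ℝ} (hab : a ≤ b)
    (hf : ContinuousOn f (Icc a b)) (ha : f a ≤ c) (hb : c < f b) :
    ∃ t ∈ Icc a b, f t = c ∧ ∀ s ∈ Icc t b, c ≤ f s := by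
  set K := Icc a b ∩ f ⁻¹' {c}
  have hK : IsCompact K := isCompact_Icc.of_isClosed_subset
    (hf.preimage_isClosed_of_isClosed isClosed_Icc isClosed_singleton) inter_subset_left
  obtain ⟨t, ⟨htab, hft⟩, hmax⟩ :=
    hK.exists_isGreatest (intermediate_value_Icc hab hf ⟨ha, hb.le⟩)
  refine ⟨t, htab, hft, fun s hs => le_of_not_gt fun hfs => ?_⟩
  have hsub : Icc s b ⊆ Icc a b := Icc_subset_Icc_left (htab.1.trans hs.1)
  obtain ⟨u, hu, hfu⟩ := intermediate_value_Icc hs.2 (hf.mono hsub) ⟨hfs.le, hb.le⟩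
  have hut : u ≤ t := hmax ⟨hsub hu, hfu⟩
  have hst : s = t := le_antisymm (hu.1.trans hut) hs.1
  exact hfs.ne (hst ▸ hft)

theorem barrier_argument_general (P We r : ℝ)
    (W W' W₁ W₂ W₃ : ℝ → ℝ)
    (horder : ∀ S, P < S →
      W₁ S ≤ 0 ∧ 0 < We ∧ We < W₂ S ∧ W₂ S ≤ 1 ∧ 1 < r ∧ r ≤ W₃ S)
    (hW : ∀ S, P < S → HasDerivAt W (W' S) S)
    (hlt : ∀ S, P < S → W S < W₂ S)
    (hlim : Filter.Tendsto W Filter.atTop (nhds We))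
    (htail : ∃ S₁, P < S₁ ∧ ∀ S, S₁ ≤ S → We < W S)
    (hcrit : ∀ S, P < S → W' S = 0 → W S = W₁ S ∨ W S = W₂ S ∨ W S = W₃ S) :
    ∀ S, P < S → W₁ S < W S ∧ We ≤ W S := by
  have hnoncrit : ∀ s, P < s → We ≤ W s → W' s ≠ 0 := by
    intro s hs hWs hcritical
    obtain ⟨h₁, h₀, -, h₂, hr, h₃⟩ := horder s hs
    have := hlt s hs
    rcases hcrit s hs hcritical with h | h | h <;> linarith
  have hge : ∀ S, P < S → We ≤ W S := by
    intro S₀ hS₀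
    by_contra! hlow
    obtain ⟨S₁, -, htail⟩ := htail
    set b := max S₀ S₁
    obtain ⟨t, htb, hWt, hright⟩ := ContinuousOn.exists_last_crossing_Icc (le_max_left S₀ S₁)
      (fun x hx => (hW x (hS₀.trans_le hx.1)).continuousAt.continuousWithinAt)
      hlow.le (htail b (le_max_right S₀ S₁))
    have htP : P < t := hS₀.trans_le htb.1
    have habove : ∀ s ∈ Ici t, We ≤ W s := fun s hs =>
      (le_total s b).elim (fun hsb => hright s ⟨hs, hsb⟩)
        fun hbs => (htail s ((le_max_right S₀ S₁).trans hbs)).le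
    exact ne_of_tendsto_atTop_of_hasDerivAt_ne_zero (fun x hx => hW x (htP.trans_le hx))
      (fun x hx => hnoncrit x (htP.trans_le hx) (habove x hx)) hlim hWt
  intro S hS
  obtain ⟨h₁, h₀, -⟩ := horder S hS
  exact ⟨by linarith [hge S hS], hge S hS⟩

/-- abstract barrier argument. Given root curves `W₁ ≤ 0 < W_e < W₂ ≤ 1 < r ≤ W₃`
on `(P,∞)`, a `C¹` function `W` with `W < W₂`, `W → W_e⁺` with `W > W_e` for large `S`, and
whose critical points can only lie on the root curves, one has `W > W₁` and `W ≥ W_e` on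
`(P,∞)`. -/
theorem barrier_argument (P We r : ℝ) (hP : 0 ≤ P)
    (W W' W₁ W₂ W₃ : ℝ → ℝ)
    (horder : ∀ S, P < S →
      W₁ S ≤ 0 ∧ 0 < We ∧ We < W₂ S ∧ W₂ S ≤ 1 ∧ 1 < r ∧ r ≤ W₃ S)
    (hW₁c : ContinuousOn W₁ (Set.Ioi P))
    (hW₂c : ContinuousOn W₂ (Set.Ioi P))
    (hW₃c : ContinuousOn W₃ (Set.Ioi P))
    (hW : ∀ S, P < S → HasDerivAt W (W' S) S)
    (hW'c : ContinuousOn W' (Set.Ioi P))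
    (hlt : ∀ S, P < S → W S < W₂ S)
    (hlim : Filter.Tendsto W Filter.atTop (nhds We))
    (htail : ∃ S₁, P < S₁ ∧ ∀ S, S₁ ≤ S → We < W S)
    (hcrit : ∀ S, P < S → W' S = 0 → W S = W₁ S ∨ W S = W₂ S ∨ W S = W₃ S) :
    ∀ S, P < S → W₁ S < W S ∧ We ≤ W S :=
  barrier_argument_general P We r W W' W₁ W₂ W₃ horder hW hlt hlim htail hcrit
end

section
/- Let φ̂ : ℝ² → (0,∞) be radially symmetric with φ̂ ≍ ⟨y⟩, |∇φ̂| ≲ 1 and D(φ̂)(y) ≤ −μ⟨y⟩^{−1} for a quantity D(φ̂) = (F(ξ)/φ̂)∂_ξφ̂ + G(ξ)|∂_ξφ̂/φ̂| − H(ξ), where F, G, H are continuous with F(ξ) − G(ξ) ≥ 0 for ξ ≥ ξ_s and F(ξ) − G(ξ) ≥ c₀ > 0 on a compact interval [p,q] ⊂ (ξ_s, ∞). Let g be a smooth radial function with g = 1 on [0, ξ_s], g = 1/2 for ξ ≥ 2q, ∂_ξg ≤ 0 everywhere, and ∂_ξg ≤ −c on [p,q]. Then for β > 0 large enough, the weight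 φ = φ̂ g^β satisfies φ ≍ ⟨y⟩, |∇φ| ≲ 1, and D(φ)(y) ≤ D(φ̂)(y) − β·1_{[p,q]}(ξ)·c₀c for all y, where 1_{[p,q]} is the indicator of ξ ∈ [p,q]. -/
noncomputable section

/-- The damping quantity
`D(φ)(ξ) = F(ξ)(∂_ξφ/φ) + G(ξ)|∂_ξφ/φ| − H(ξ)` for a radial weight profile `φ`. -/
noncomputable def Dop (F G H : ℝ → ℝ) (φ : ℝ → ℝ) (ξ : ℝ) : ℝ :=
  F ξ * (deriv φ ξ / φ ξ) + G ξ * |deriv φ ξ / φ ξ| - H ξ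

/-- modification of a repulsive weight. If `φ̂ ≍ ⟨y⟩`, `|∇φ̂| ≲ 1`,
`D(φ̂) ≤ −μ⟨y⟩^{−1}`, `F − G ≥ 0` for `ξ ≥ ξ_s` and `F − G ≥ c₀` on `[p,q] ⊂ (ξ_s,∞)`,
and `g` is a smooth decreasing cutoff profile equal to `1` on `[0,ξ_s]`, `1/2` beyond `2q`,
with `∂_ξ g ≤ −c` on `[p,q]`, then for `β` large enough the weight `φ = φ̂ g^β` satisfies
`φ ≍ ⟨y⟩`, `|∇φ| ≲ 1`, and `D(φ) ≤ D(φ̂) − β·1_{[p,q]}·c₀c`. -/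
theorem modified_weight (μ c₀ c ξs p q : ℝ)
    (hμ : 0 < μ) (hc₀ : 0 < c₀) (hc : 0 < c) (hξs : 0 < ξs)
    (hξp : ξs < p) (hpq : p ≤ q)
    (F G H : ℝ → ℝ) (hFc : Continuous F) (hGc : Continuous G) (hHc : Continuous H)
    (hGpos : ∀ ξ, 0 ≤ G ξ)
    (hFG : ∀ ξ, ξs ≤ ξ → 0 ≤ F ξ - G ξ)
    (hFGpq : ∀ ξ ∈ Set.Icc p q, c₀ ≤ F ξ - G ξ)
    (φh : ℝ → ℝ) (c₁ c₂ : ℝ) (hc₁ : 0 < c₁) (hc₂ : 0 < c₂)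
    (hφsm : ContDiff ℝ (⊤ : ℕ∞) φh)
    (hφlow : ∀ ξ, 0 ≤ ξ → c₁ * Real.sqrt (1 + ξ ^ 2) ≤ φh ξ)
    (hφhigh : ∀ ξ, 0 ≤ ξ → φh ξ ≤ c₂ * Real.sqrt (1 + ξ ^ 2))
    (hφgrad : ∀ ξ, 0 ≤ ξ → |deriv φh ξ| ≤ c₂)
    (hD : ∀ ξ, 0 ≤ ξ → Dop F G H φh ξ ≤ -μ / Real.sqrt (1 + ξ ^ 2))
    (g : ℝ → ℝ) (hg : ContDiff ℝ (⊤ : ℕ∞) g)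
    (hg1 : ∀ ξ ∈ Set.Icc (0 : ℝ) ξs, g ξ = 1)
    (hg2 : ∀ ξ, 2 * q ≤ ξ → g ξ = 1 / 2)
    (hg3 : ∀ ξ, 0 ≤ ξ → deriv g ξ ≤ 0)
    (hg4 : ∀ ξ ∈ Set.Icc p q, deriv g ξ ≤ -c) :
    ∃ β₀ : ℝ, 0 < β₀ ∧ ∀ β, β₀ ≤ β →
      (∃ c₁' c₂' : ℝ, 0 < c₁' ∧ 0 < c₂' ∧ ∀ ξ, 0 ≤ ξ →
          c₁' * Real.sqrt (1 + ξ ^ 2) ≤ φh ξ * g ξ ^ β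
          ∧ φh ξ * g ξ ^ β ≤ c₂' * Real.sqrt (1 + ξ ^ 2)
          ∧ |deriv (fun s => φh s * g s ^ β) ξ| ≤ c₂')
      ∧ ∀ ξ, 0 ≤ ξ →
          Dop F G H (fun s => φh s * g s ^ β) ξ
            ≤ Dop F G H φh ξ
              - β * Set.indicator (Set.Icc p q) (fun _ => c₀ * c) ξ := by
  have hq0 : 0 < q := lt_of_lt_of_le (hξs.trans hξp) hpq
  have hgd : Differentiable ℝ g := hg.differentiable (by simp)
  have hφd : Differentiable ℝ φh := hφsm.differentiable (by simp)
  have hgc' : Continuous (deriv g) := hg.continuous_deriv (by simp)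
  have hclosed : IsClosed {x : ℝ | deriv g x = 0} := isClosed_eq hgc' continuous_const
  have hzero1 : ∀ x ∈ Set.Icc (0:ℝ) ξs, deriv g x = 0 := by
    have hsub : Set.Ioo (0:ℝ) ξs ⊆ {x | deriv g x = 0} := by
      intro x hx
      have hev : g =ᶠ[nhds x] (fun _ => (1:ℝ)) := by
        filter_upwards [Ioo_mem_nhds hx.1 hx.2] with y hy using hg1 y ⟨hy.1.le, hy.2.le⟩
      have hd := hev.deriv_eq
      simp only [Set.mem_setOf_eq, hd, deriv_const]
    intro x hx
    have h := hclosed.closure_subset_iff.mpr hsub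
    rw [closure_Ioo hξs.ne] at h
    exact h hx
  have hzero2 : ∀ x, 2*q ≤ x → deriv g x = 0 := by
    have hsub : Set.Ioi (2*q) ⊆ {x | deriv g x = 0} := by
      intro x hx
      have hev : g =ᶠ[nhds x] (fun _ => (1/2:ℝ)) := by
        filter_upwards [Ioi_mem_nhds hx] with y hy using hg2 y hy.le
      have hd := hev.deriv_eq
      simp only [Set.mem_setOf_eq, hd, deriv_const]
    intro x hx
    have h := hclosed.closure_subset_iff.mpr hsub
    rw [closure_Ioi] at h
    exact h hx
  have hanti : AntitoneOn g (Set.Ici (0:ℝ)) := by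
    apply antitoneOn_of_deriv_nonpos (convex_Ici 0) hg.continuous.continuousOn
      (hgd.differentiableOn)
    intro x hx
    rw [interior_Ici] at hx
    exact hg3 x (le_of_lt hx)
  have hg_le1 : ∀ ξ, 0 ≤ ξ → g ξ ≤ 1 := by
    intro ξ hξ
    have h := hanti (Set.mem_Ici.mpr le_rfl) (Set.mem_Ici.mpr hξ) hξ
    rwa [hg1 0 ⟨le_rfl, hξs.le⟩] at h
  have hg_half : ∀ ξ, 0 ≤ ξ → (1/2:ℝ) ≤ g ξ := by
    intro ξ hξ
    have hm : ξ ≤ max ξ (2*q) := le_max_left _ _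
    have h := hanti (Set.mem_Ici.mpr hξ) (Set.mem_Ici.mpr (hξ.trans hm)) hm
    rwa [hg2 _ (le_max_right _ _)] at h
  have hgpos : ∀ ξ, 0 ≤ ξ → 0 < g ξ :=
    fun ξ hξ => lt_of_lt_of_le (by norm_num) (hg_half ξ hξ)
  have hφpos : ∀ ξ, 0 ≤ ξ → 0 < φh ξ := by
    intro ξ hξ
    exact lt_of_lt_of_le (mul_pos hc₁ (Real.sqrt_pos.mpr (by positivity))) (hφlow ξ hξ)
  obtain ⟨x₀, hx₀mem, hx₀⟩ := (isCompact_Icc (a := (0:ℝ)) (b := 2*q)).exists_isMaxOn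
    ⟨0, le_rfl, by linarith⟩ ((hφsm.continuous.mul hgc'.abs).continuousOn)
  set K := φh x₀ * |deriv g x₀| with hKdef
  have hK0 : 0 ≤ K := mul_nonneg (hφpos x₀ hx₀mem.1).le (abs_nonneg _)
  refine ⟨1, one_pos, fun β hβ => ?_⟩
  have hβ0 : (0:ℝ) ≤ β := by linarith
  have hder : ∀ ξ : ℝ, HasDerivAt (fun s => φh s * g s ^ β)
      (deriv φh ξ * g ξ ^ β + φh ξ * (deriv g ξ * β * g ξ ^ (β-1))) ξ :=
    fun ξ => (hφd ξ).hasDerivAt.mul (((hgd ξ).hasDerivAt).rpow_const (Or.inr hβ))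
  constructor
  · refine ⟨c₁ * (1/2) ^ β, c₂ + β * K, by positivity, by positivity, fun ξ hξ => ?_⟩
    have hg0 := hgpos ξ hξ
    have hgβ1 : g ξ ^ β ≤ 1 := Real.rpow_le_one hg0.le (hg_le1 ξ hξ) hβ0
    have hgβl : (1/2:ℝ) ^ β ≤ g ξ ^ β := Real.rpow_le_rpow (by norm_num) (hg_half ξ hξ) hβ0
    have hgβpos : 0 < g ξ ^ β := Real.rpow_pos_of_pos hg0 β
    have hhalfpos : (0:ℝ) < (1/2:ℝ) ^ β := Real.rpow_pos_of_pos (by norm_num) β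
    refine ⟨?_, ?_, ?_⟩
    · calc c₁ * (1/2:ℝ)^β * Real.sqrt (1+ξ^2) = (c₁ * Real.sqrt (1+ξ^2)) * (1/2:ℝ)^β := by ring
        _ ≤ φh ξ * (g ξ ^ β) := mul_le_mul (hφlow ξ hξ) hgβl hhalfpos.le (hφpos ξ hξ).le
    · calc φh ξ * g ξ ^ β ≤ φh ξ * 1 := mul_le_mul_of_nonneg_left hgβ1 (hφpos ξ hξ).le
        _ = φh ξ := mul_one _
        _ ≤ c₂ * Real.sqrt (1+ξ^2) := hφhigh ξ hξ
        _ ≤ (c₂ + β*K) * Real.sqrt (1+ξ^2) := by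
            apply mul_le_mul_of_nonneg_right _ (Real.sqrt_nonneg _)
            nlinarith [mul_nonneg hβ0 hK0]
    · rw [(hder ξ).deriv]
      have hterm2 : φh ξ * |deriv g ξ| ≤ K := by
        by_cases hcase : ξ ≤ 2*q
        · exact hx₀ ⟨hξ, hcase⟩
        · rw [hzero2 ξ (le_of_not_ge hcase)]
          simpa using hK0
      have hgβm1 : g ξ ^ (β-1) ≤ 1 := Real.rpow_le_one hg0.le (hg_le1 ξ hξ) (by linarith)
      have hgβm1pos : 0 < g ξ ^ (β-1) := Real.rpow_pos_of_pos hg0 _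
      have h1 : |deriv φh ξ * g ξ ^ β| ≤ c₂ := by
        rw [abs_mul, abs_of_nonneg hgβpos.le]
        nlinarith [hφgrad ξ hξ, abs_nonneg (deriv φh ξ)]
      have h2 : |φh ξ * (deriv g ξ * β * g ξ ^ (β-1))| ≤ β * K := by
        rw [abs_mul, abs_mul, abs_mul, abs_of_nonneg (hφpos ξ hξ).le,
          abs_of_nonneg hβ0, abs_of_nonneg hgβm1pos.le]
        nlinarith [abs_nonneg (deriv g ξ), (hφpos ξ hξ).le,
          mul_le_mul_of_nonneg_right hterm2 hβ0,
          mul_nonneg (mul_nonneg (hφpos ξ hξ).le (abs_nonneg (deriv g ξ))) hβ0]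
      calc |deriv φh ξ * g ξ ^ β + φh ξ * (deriv g ξ * β * g ξ ^ (β-1))|
          ≤ |deriv φh ξ * g ξ ^ β| + |φh ξ * (deriv g ξ * β * g ξ ^ (β-1))| := abs_add_le _ _
        _ ≤ c₂ + β * K := add_le_add h1 h2
  · intro ξ hξ
    have hg0 := hgpos ξ hξ
    have hφ0 := hφpos ξ hξ
    have hgβpos : 0 < g ξ ^ β := Real.rpow_pos_of_pos hg0 β
    have hratio : deriv (fun s => φh s * g s ^ β) ξ / (φh ξ * g ξ ^ β)
        = deriv φh ξ / φh ξ + β * (deriv g ξ / g ξ) := by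
      rw [(hder ξ).deriv, Real.rpow_sub_one hg0.ne']
      field_simp
    have hBle : β * (deriv g ξ / g ξ) ≤ 0 :=
      mul_nonpos_of_nonneg_of_nonpos hβ0 (div_nonpos_of_nonpos_of_nonneg (hg3 ξ hξ) hg0.le)
    set A := deriv φh ξ / φh ξ with hA
    set B := β * (deriv g ξ / g ξ) with hB
    have habs : |A + B| ≤ |A| - B := by
      calc |A+B| ≤ |A| + |B| := abs_add_le _ _
        _ = |A| - B := by rw [abs_of_nonpos hBle]; ring
    have hkey : (F ξ - G ξ) * B ≤ - (β * Set.indicator (Set.Icc p q) (fun _ => c₀*c) ξ) := by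
      by_cases hmem : ξ ∈ Set.Icc p q
      · rw [Set.indicator_of_mem hmem]
        have hg'le : deriv g ξ ≤ -c := hg4 ξ hmem
        have hdiv : deriv g ξ / g ξ ≤ -c := by
          rw [div_le_iff₀ hg0]
          nlinarith [hg_le1 ξ hξ]
        have hBle' : B ≤ β * (-c) := mul_le_mul_of_nonneg_left hdiv hβ0
        have hFGξ := hFGpq ξ hmem
        nlinarith
      · rw [Set.indicator_of_notMem hmem]
        by_cases hcase : ξs ≤ ξ
        · nlinarith [hFG ξ hcase]
        · have hz : deriv g ξ = 0 := hzero1 ξ ⟨hξ, (not_le.1 hcase).le⟩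
          simp [hB, hz]
    have hGξ := hGpos ξ
    have e1 : G ξ * |A + B| ≤ G ξ * (|A| - B) := mul_le_mul_of_nonneg_left habs hGξ
    simp only [Dop, hratio]
    linarith [e1, hkey]
end
end
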